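/- Let q = 2^m with m a positive integer. The additive (2-linearized) map L_2(X) = X + X^2 + X^{q} on F_{q^3} is bijective if and only if m is not congruent to 2 modulo 3. -/

import Mathlib

/-!
Since `L(x) = x + x² + x^q` is additive, it is bijective exactly when it has no nonzero root.
Applying `x ↦ x^q` twice more to `x^q = x + x²` and using `x^(q³) = x` gives `(x + x² + x⁴)² = 0`,
so a nonzero root satisfies `x³ + x + 1 = 0`. Such an `x` has order `7`, whence
`x^q = x^(2^(m mod 3))`, and `x + x² + x^(2^r)` vanishes only for `r = 2`. Conversely, when
`m ≡ 2 (mod 3)` the roots of `X³ + X + 1` are roots of `L`, and they exist in `F` because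
`7 ∣ 8^m - 1`: they are `ζ, ζ², ζ⁴` or `ζ³, ζ⁶, ζ⁵` for an element `ζ` of order `7`.
-/

theorem two_pow_mod_seven (m : ℕ) : 2 ^ m % 7 = 2 ^ (m % 3) := by
  have hr : 2 ^ (m % 3) < 7 :=
    (Nat.pow_le_pow_right two_pos (Nat.le_of_lt_succ (Nat.mod_lt m three_pos))).trans_lt
      (by norm_num)
  conv_lhs => rw [← Nat.div_add_mod m 3, pow_add, pow_mul, Nat.mul_mod, Nat.pow_mod]
  norm_num [Nat.mod_eq_of_lt hr]

def linearizedTrinomial (R : Type*) [CommRing R] [CharP R 2] (m : ℕ) : R →+ R where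
  toFun x := x + x ^ 2 + x ^ 2 ^ m
  map_zero' := by simp
  map_add' x y := by
    rw [add_pow_char_pow]
    linear_combination x * y * CharTwo.two_eq_zero (R := R)

section CharTwo

variable {R : Type*} [CommRing R] [CharP R 2]

theorem linearizedTrinomial_apply (m : ℕ) (x : R) :
    linearizedTrinomial R m x = x + x ^ 2 + x ^ 2 ^ m := rfl

theorem add_sq_add_pow_four_eq_zero [IsReduced R] {m : ℕ} {x : R}
    (hx : x ^ 2 ^ m = x + x ^ 2) (hfix : x ^ (2 ^ m) ^ 3 = x) : x + x ^ 2 + x ^ 4 = 0 := by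
  have h2 : (2 : R) = 0 := CharTwo.two_eq_zero
  have hq2 : x ^ (2 ^ m) ^ 2 = x + x ^ 4 := by
    rw [sq, pow_mul, hx, add_pow_char_pow, ← pow_mul, mul_comm, pow_mul, hx]
    linear_combination (x ^ 3 + x ^ 2) * h2
  have hq3 : x ^ (2 ^ m) ^ 3 = x + x ^ 2 + x ^ 4 + x ^ 8 := by
    rw [pow_succ, pow_mul, hq2, add_pow_char_pow, ← pow_mul, mul_comm, pow_mul, hx]
    linear_combination (2 * x ^ 7 + 3 * x ^ 6 + 2 * x ^ 5) * h2
  apply IsReduced.eq_zero _ ⟨2, _⟩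
  linear_combination hq3.symm.trans hfix + (x ^ 6 + x ^ 5 + x ^ 3) * h2

theorem pow_seven_eq_one_of_cube_add_self_add_one_eq_zero {x : R} (hx : x ^ 3 + x + 1 = 0) :
    x ^ 7 = 1 := by
  linear_combination (x ^ 4 - x ^ 2 - x + 1) * hx + (x ^ 2 - 1) * CharTwo.two_eq_zero (R := R)

theorem add_sq_add_pow_two_pow_eq_zero_iff [Nontrivial R] {x : R} (hx : x ^ 3 + x + 1 = 0)
    (m : ℕ) : x + x ^ 2 + x ^ 2 ^ m = 0 ↔ m % 3 = 2 := by
  have h2 : (2 : R) = 0 := CharTwo.two_eq_zero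
  have hunit : IsUnit x := IsUnit.of_mul_eq_one (x ^ 2 + 1) (by linear_combination hx - h2)
  rw [pow_eq_pow_mod (2 ^ m) (pow_seven_eq_one_of_cube_add_self_add_one_eq_zero hx),
    two_pow_mod_seven]
  have : m % 3 < 3 := Nat.mod_lt m three_pos
  interval_cases m % 3
  · simpa [show x + x ^ 2 + x = x ^ 2 by linear_combination x * h2] using (hunit.pow 2).ne_zero
  · simpa [show x + x ^ 2 + x ^ 2 = x by linear_combination x ^ 2 * h2] using hunit.ne_zero
  · simp only [iff_true]
    linear_combination x * hx

end CharTwo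

theorem exists_cube_add_self_add_one_eq_zero {F : Type*} [Field F] [Fintype F] [CharP F 2]
    (h7 : 7 ∣ Fintype.card F - 1) : ∃ x : F, x ^ 3 + x + 1 = 0 := by
  have : Fact (Nat.Prime 7) := ⟨by norm_num⟩
  classical
  obtain ⟨u, hu⟩ := exists_prime_orderOf_dvd_card 7 (Fintype.card_units (α := F) ▸ h7)
  set ζ : F := (u : F)
  have hζ : orderOf ζ = 7 := orderOf_units.trans hu
  have h7 : ζ ^ 7 = 1 := hζ ▸ pow_orderOf_eq_one ζ
  have h1 : ζ ≠ 1 := fun h ↦ by simp [h] at hζ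
  have hfac : (ζ - 1) * ((ζ ^ 3 + ζ + 1) * (ζ ^ 3 + ζ ^ 2 + 1)) = 0 := by
    linear_combination h7 + ζ ^ 3 * (ζ - 1) * CharTwo.two_eq_zero (R := F)
  rcases (mul_eq_zero.mp hfac).resolve_left (sub_ne_zero.mpr h1) |> mul_eq_zero.mp with h | h
  · exact ⟨ζ, h⟩
  · exact ⟨ζ ^ 3, by linear_combination h + ζ ^ 2 * h7⟩

theorem stmt_10_general (m : ℕ) (F : Type*) [Field F] [Fintype F]
    (hF : Fintype.card F = (2^m)^3) :
    Function.Bijective (fun x : F => x + x^2 + x^(2^m)) ↔ m % 3 ≠ 2 := by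
  have : CharP F 2 := charP_of_card_eq_prime_pow (hF.trans (pow_mul 2 m 3).symm)
  have h7 : 7 ∣ Fintype.card F - 1 := by
    rw [hF, ← pow_mul, mul_comm, pow_mul]
    simpa using Nat.sub_dvd_pow_sub_pow 8 1 m
  change Function.Bijective (linearizedTrinomial F m) ↔ _
  rw [← Finite.injective_iff_bijective, injective_iff_map_eq_zero]
  constructor
  · intro hinj hm2
    obtain ⟨x, hx⟩ := exists_cube_add_self_add_one_eq_zero h7
    have hx0 : x ≠ 0 := by rintro rfl; simp at hx
    exact hx0 (hinj x ((add_sq_add_pow_two_pow_eq_zero_iff hx m).mpr hm2))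
  · intro hm2 x hLx
    by_contra hx0
    have hfix : x ^ (2 ^ m) ^ 3 = x := hF ▸ FiniteField.pow_card x
    have hq : x ^ 2 ^ m = x + x ^ 2 := by
      linear_combination (linearizedTrinomial_apply m x).symm.trans hLx -
        (x + x ^ 2) * CharTwo.two_eq_zero (R := F)
    have hroot : x * (x ^ 3 + x + 1) = 0 := by
      linear_combination add_sq_add_pow_four_eq_zero hq hfix
    exact hm2 ((add_sq_add_pow_two_pow_eq_zero_iff
      ((mul_eq_zero.mp hroot).resolve_left hx0) m).mp hLx)

theorem stmt_10 (m : ℕ) (hm : 0 < m) (F : Type*) [Field F] [Fintype F]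
    (hF : Fintype.card F = (2^m)^3) :
    Function.Bijective (fun x : F => x + x^2 + x^(2^m)) ↔ m % 3 ≠ 2 :=
  stmt_10_general m F hF
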